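/- For any two density operators ρ and σ on a finite-dimensional Hilbert space, 1 − F(ρ, σ) ≤ (1/2)‖ρ − σ‖₁, where F is the fidelity. -/

import Mathlib

open Matrix BigOperators Kronecker ComplexOrder

noncomputable def negMulLogb (x : ℝ) : ℝ := -(x * Real.logb 2 x)

/-- von Neumann entropy (base 2) of a matrix, via its eigenvalues. -/
noncomputable def vN {n : Type*} [Fintype n] [DecidableEq n] (ρ : Matrix n n ℂ) : ℝ :=
  if h : ρ.IsHermitian then ∑ i, negMulLogb (h.eigenvalues i) else 0

/-- A density operator: positive semidefinite with unit trace. -/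
def IsDensity {n : Type*} [Fintype n] [DecidableEq n] (ρ : Matrix n n ℂ) : Prop :=
  ρ.PosSemidef ∧ ρ.trace = 1

/-- Partial trace over the second tensor factor. -/
noncomputable def ptraceB {A B : Type*} [Fintype B] (ρ : Matrix (A × B) (A × B) ℂ) :
    Matrix A A ℂ :=
  Matrix.of fun a a' => ∑ b, ρ (a, b) (a', b)

/-- Partial trace over the first tensor factor. -/
noncomputable def ptraceA {A B : Type*} [Fintype A] (ρ : Matrix (A × B) (A × B) ℂ) :
    Matrix B B ℂ :=
  Matrix.of fun b b' => ∑ a, ρ (a, b) (a, b')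

/-- Positive square root of a positive semidefinite matrix (junk value 0 otherwise). -/
noncomputable def msqrt {n : Type*} [Fintype n] [DecidableEq n] (M : Matrix n n ℂ) :
    Matrix n n ℂ :=
  by classical exact if h : M.PosSemidef then
    h.1.eigenvectorUnitary.1 * diagonal ((↑) ∘ Real.sqrt ∘ h.1.eigenvalues) *
      (star h.1.eigenvectorUnitary : Matrix n n ℂ) else 0

/-- Trace norm of a matrix. -/
noncomputable def traceNorm {n : Type*} [Fintype n] [DecidableEq n] (X : Matrix n n ℂ) : ℝ :=
  ((msqrt (Xᴴ * X)).trace).re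

/-- Outer product |ξ⟩⟨ξ|. -/
noncomputable def outer {n : Type*} (ξ : n → ℂ) : Matrix n n ℂ :=
  Matrix.of fun i j => ξ i * (starRingEnd ℂ) (ξ j)

/-- Fidelity `F(ρ,σ) = Tr √(√ρ σ √ρ)` (square-root convention). -/
noncomputable def fidelity {n : Type*} [Fintype n] [DecidableEq n] (ρ σ : Matrix n n ℂ) : ℝ :=
  ((msqrt (msqrt ρ * σ * msqrt ρ)).trace).re

/-!
Write `R = √ρ` and `S = √σ`. The fidelity is `Tr |S R| ≥ Re Tr (S R)`, while unit traces give
`Tr (R - S)² = 2 - 2 Re Tr (S R)`; the Powers–Størmer inequality `Tr (R - S)² ≤ ‖R² - S²‖₁` then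
yields `2 - 2 F(ρ, σ) ≤ ‖ρ - σ‖₁`. Both trace inequalities are read off diagonal entries after
conjugating into an eigenbasis: that of `|Y|` for `|Tr Y| ≤ Tr |Y|`, where `Yᴴ Y = |Y|²` bounds
each diagonal entry of `Y` by the matching eigenvalue of `|Y|`, and that of `R - S` for
Powers–Størmer.
-/

open scoped MatrixOrder

section CFCAbs

variable {A : Type*} [NonUnitalRing A] [StarRing A] [TopologicalSpace A] [IsTopologicalRing A]
  [T2Space A] [Module ℝ A] [SMulCommClass ℝ A A] [IsScalarTower ℝ A A]
  [NonUnitalContinuousFunctionalCalculus ℝ A IsSelfAdjoint]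
  [PartialOrder A] [StarOrderedRing A] [NonnegSpectrumClass ℝ A]

lemma CFC.neg_abs_le (a : A) (ha : IsSelfAdjoint a := by cfc_tac) : -CFC.abs a ≤ a := by
  rw [neg_le_iff_add_nonneg', CFC.abs_add_self a]
  exact nsmul_nonneg (CFC.posPart_nonneg a) 2

lemma CFC.le_abs (a : A) (ha : IsSelfAdjoint a := by cfc_tac) : a ≤ CFC.abs a := by
  rw [← sub_nonneg, CFC.abs_sub_self a]
  exact nsmul_nonneg (CFC.negPart_nonneg a) 2

end CFCAbs

namespace Matrix

lemma norm_sq_apply_le_re_conjTranspose_mul_self_apply {m n 𝕜 : Type*} [Fintype m] [RCLike 𝕜]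
    (M : Matrix m n 𝕜) (i : m) (j : n) : ‖M i j‖ ^ 2 ≤ RCLike.re ((Mᴴ * M) j j) := by
  simp only [mul_apply, conjTranspose_apply, map_sum, RCLike.star_def, RCLike.conj_mul]
  norm_cast
  exact Finset.single_le_sum (f := fun k => ‖M k j‖ ^ 2) (fun k _ => by positivity)
    (Finset.mem_univ i)

variable {n : Type*} [Fintype n] [DecidableEq n]

lemma trace_conjStarAlgAut {R : Type*} [CommRing R] [StarRing R] (U : unitary (Matrix n n R))
    (A : Matrix n n R) : (Unitary.conjStarAlgAut R _ U A).trace = A.trace := by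
  rw [Unitary.conjStarAlgAut_apply, trace_mul_cycle, Unitary.coe_star_mul_self, one_mul]

theorem norm_trace_le_re_trace_cfcAbs (Y : Matrix n n ℂ) : ‖Y.trace‖ ≤ (CFC.abs Y).trace.re := by
  have hA : (CFC.abs Y).PosSemidef := (CFC.abs_nonneg Y).posSemidef
  set φ := Unitary.conjStarAlgAut ℂ _ (star hA.1.eigenvectorUnitary)
  set s := hA.1.eigenvalues
  have hD : φ (CFC.abs Y) = diagonal (RCLike.ofReal ∘ s) :=
    hA.1.conjStarAlgAut_star_eigenvectorUnitary
  have hsq : (φ Y)ᴴ * φ Y = diagonal (RCLike.ofReal ∘ s) * diagonal (RCLike.ofReal ∘ s) := by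
    rw [← star_eq_conjTranspose, ← map_star, ← map_mul, ← CFC.abs_mul_abs, map_mul, hD]
  have hentry (i : n) : ‖φ Y i i‖ ≤ s i := by
    have h := norm_sq_apply_le_re_conjTranspose_mul_self_apply (φ Y) i i
    rw [hsq, diagonal_mul_diagonal, diagonal_apply_eq, Function.comp_apply, ← RCLike.ofReal_mul,
      RCLike.ofReal_re, ← sq] at h
    exact (pow_le_pow_iff_left₀ (norm_nonneg _) (hA.eigenvalues_nonneg i) two_ne_zero).mp h
  calc ‖Y.trace‖ = ‖(φ Y).trace‖ := by rw [trace_conjStarAlgAut]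
    _ ≤ ∑ i, ‖φ Y i i‖ := norm_sum_le _ _
    _ ≤ ∑ i, s i := Finset.sum_le_sum fun i _ => hentry i
    _ = (CFC.abs Y).trace.re := by rw [hA.1.trace_eq_sum_eigenvalues]; simp [s]

lemma sq_le_re_apply_of_sub_eq_diagonal {R S P : Matrix n n ℂ} (hR : 0 ≤ R) (hS : 0 ≤ S)
    {μ : n → ℝ} (hμ : R - S = diagonal fun j => (μ j : ℂ))
    (hP : -P ≤ R * R - S * S) (hP' : R * R - S * S ≤ P) (i : n) :
    μ i ^ 2 ≤ (P i i).re := by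
  have re_diag_nonneg {M : Matrix n n ℂ} (hM : 0 ≤ M) : 0 ≤ (M i i).re :=
    (Complex.le_def.mp hM.posSemidef.diag_nonneg).1
  have hr := re_diag_nonneg hR
  have hs := re_diag_nonneg hS
  have hlow := re_diag_nonneg (neg_le_iff_add_nonneg'.mp hP)
  have hupp := re_diag_nonneg (sub_nonneg.mpr hP')
  have hμi : μ i = (R i i).re - (S i i).re := by
    simpa using congr_arg Complex.re (congr_fun₂ hμ i i).symm
  have hΔ : (R * R - S * S) i i = μ i * (R + S) i i := by
    have h2 : (R - S) * (R + S) + (R + S) * (R - S) = (R * R - S * S) + (R * R - S * S) := by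
      noncomm_ring
    have := congr_fun₂ h2 i i
    rw [hμ, Matrix.add_apply, Matrix.add_apply, diagonal_mul, mul_diagonal] at this
    linear_combination -this / 2
  simp only [Matrix.add_apply, Matrix.sub_apply, Complex.add_re, Complex.sub_re, hΔ,
    Complex.mul_re, Complex.ofReal_re, Complex.ofReal_im, zero_mul, sub_zero] at hlow hupp
  -- `|μ i| ≤ Rᵢᵢ + Sᵢᵢ`, so `μ i ^ 2 ≤ |μ i (Rᵢᵢ + Sᵢᵢ)| = |(R² - S²)ᵢᵢ| ≤ Pᵢᵢ`
  rcases le_total 0 (μ i) with hμ0 | hμ0 <;> nlinarith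

theorem re_trace_sub_mul_sub_le_re_trace_cfcAbs {R S : Matrix n n ℂ} (hR : 0 ≤ R) (hS : 0 ≤ S) :
    ((R - S) * (R - S)).trace.re ≤ (CFC.abs (R * R - S * S)).trace.re := by
  have hX : (R - S).IsHermitian := hR.isSelfAdjoint.sub hS.isSelfAdjoint
  have hΔ : IsSelfAdjoint (R * R - S * S) := by
    simpa only [hR.isSelfAdjoint.star_eq, hS.isSelfAdjoint.star_eq] using
      (IsSelfAdjoint.star_mul_self R).sub (IsSelfAdjoint.star_mul_self S)
  set U := star hX.eigenvectorUnitary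
  set φ := Unitary.conjStarAlgAut ℂ _ U
  have hD : φ (R - S) = diagonal fun j => (hX.eigenvalues j : ℂ) :=
    hX.conjStarAlgAut_star_eigenvectorUnitary
  have hlow := OrderHomClass.mono φ (CFC.neg_abs_le _ hΔ)
  have hupp := OrderHomClass.mono φ (CFC.le_abs _ hΔ)
  simp only [map_neg, map_sub, map_mul] at hlow hupp
  rw [← trace_conjStarAlgAut U, ← trace_conjStarAlgAut U (CFC.abs _), map_mul, hD,
    diagonal_mul_diagonal, trace_diagonal, trace, Complex.re_sum, Complex.re_sum]
  refine Finset.sum_le_sum fun i _ => ?_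
  rw [← Complex.ofReal_mul, Complex.ofReal_re, ← sq]
  exact sq_le_re_apply_of_sub_eq_diagonal (map_nonneg φ hR) (map_nonneg φ hS)
    (by rw [← map_sub]; exact hD) hlow hupp i

end Matrix

section

variable {n : Type*} [Fintype n] [DecidableEq n]

lemma msqrt_eq_cfcSqrt {M : Matrix n n ℂ} (hM : M.PosSemidef) : msqrt M = CFC.sqrt M := by
  rw [CFC.sqrt_eq_cfc, cfc_nnreal_eq_real _ M hM.nonneg, hM.1.cfc_eq, msqrt, dif_pos hM]
  simp [IsHermitian.cfc, Function.comp_def, max_eq_left (hM.eigenvalues_nonneg _)]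

lemma traceNorm_eq_re_trace_cfcAbs (X : Matrix n n ℂ) :
    traceNorm X = (CFC.abs X).trace.re := by
  rw [traceNorm, msqrt_eq_cfcSqrt (posSemidef_conjTranspose_mul_self X)]
  rfl

lemma fidelity_eq_re_trace_cfcAbs {ρ σ : Matrix n n ℂ} (hρ : 0 ≤ ρ) (hσ : 0 ≤ σ) :
    fidelity ρ σ = (CFC.abs (CFC.sqrt σ * CFC.sqrt ρ)).trace.re := by
  have hprod : CFC.sqrt ρ * σ * CFC.sqrt ρ =
      star (CFC.sqrt σ * CFC.sqrt ρ) * (CFC.sqrt σ * CFC.sqrt ρ) := by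
    rw [star_mul, (CFC.sqrt_nonneg ρ).isSelfAdjoint.star_eq,
      (CFC.sqrt_nonneg σ).isSelfAdjoint.star_eq]
    conv_lhs => rw [← CFC.sqrt_mul_sqrt_self σ]
    noncomm_ring
  rw [fidelity, msqrt_eq_cfcSqrt hρ.posSemidef, hprod,
    msqrt_eq_cfcSqrt (star_mul_self_nonneg (CFC.sqrt σ * CFC.sqrt ρ)).posSemidef]
  rfl

end

/-- `1 - F(ρ,σ) ≤ (1/2) ‖ρ - σ‖₁`. -/
theorem one_sub_fidelity_le_half_traceNorm {n : Type*} [Fintype n] [DecidableEq n]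
    (ρ σ : Matrix n n ℂ) (hρ : IsDensity ρ) (hσ : IsDensity σ) :
    1 - fidelity ρ σ ≤ (1 / 2) * traceNorm (ρ - σ) := by
  obtain ⟨hρ₀, hρ₁⟩ := hρ
  obtain ⟨hσ₀, hσ₁⟩ := hσ
  set R := CFC.sqrt ρ
  set S := CFC.sqrt σ
  have hF : (S * R).trace.re ≤ fidelity ρ σ := by
    rw [fidelity_eq_re_trace_cfcAbs hρ₀.nonneg hσ₀.nonneg]
    exact (Complex.re_le_norm _).trans (norm_trace_le_re_trace_cfcAbs _)
  have hPS : 2 - 2 * (S * R).trace.re ≤ traceNorm (ρ - σ) := by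
    have hexpand : (R - S) * (R - S) = R * R + S * S - R * S - S * R := by noncomm_ring
    have h := re_trace_sub_mul_sub_le_re_trace_cfcAbs (CFC.sqrt_nonneg ρ) (CFC.sqrt_nonneg σ)
    rw [hexpand, CFC.sqrt_mul_sqrt_self ρ hρ₀.nonneg, CFC.sqrt_mul_sqrt_self σ hσ₀.nonneg,
      trace_sub, trace_sub, trace_add, trace_mul_comm R S, hρ₁, hσ₁] at h
    rw [traceNorm_eq_re_trace_cfcAbs]
    simp only [Complex.sub_re, Complex.add_re, Complex.one_re] at h
    linarith
  linarith
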